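/- arXiv:2410.04887 — 2 statements merged into one kernel-verified Lean document; each statement's English description precedes it below -/
import Mathlib

section
/- Consider λ-regularized gradient descent on the square loss of a network ending in linear layers, so that for each linear layer ℓ ∈ {L1+1,…,L} the update is W_ℓ^{k+1} = (1−ηλ)W_ℓ^k − η T_ℓ^k, where T_ℓ^k = (W_{ℓ+1}^k)^⊤⋯(W_L^k)^⊤ (Z_L^k − Y)(Z_{L1}^k)^⊤ (W_{L1+1}^k)^⊤⋯(W_{ℓ−1}^k)^⊤ (empty products understood as identity matrices). Define the balancedness gap D_ℓ^k = (W_{ℓ+1}^k)^⊤ W_{ℓ+1}^k − W_ℓ^k (W_ℓ^k)^⊤. Then for every ℓ ∈ {L1+1,…,L−1} the exact recursion D_ℓ^{k+1} = (1−ηλ)² D_ℓ^k + η² ((T_{ℓ+1}^k)^⊤ T_{ℓ+1}^k − T_ℓ^k (T_ℓ^k)^⊤) holds. -/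
open Matrix Finset Real

/-- Frobenius norm of a real matrix. -/
noncomputable def frobNorm {m n : ℕ} (A : Matrix (Fin m) (Fin n) ℝ) : ℝ :=
  Real.sqrt (∑ i, ∑ j, (A i j) ^ 2)

/-- Operator (spectral) norm of a real matrix. -/
noncomputable def opNorm {m n : ℕ} (A : Matrix (Fin m) (Fin n) ℝ) : ℝ :=
  sSup {x : ℝ | ∃ v : Fin n → ℝ, (∑ i, v i ^ 2) ≤ 1 ∧ x = Real.sqrt (∑ i, (A.mulVec v i) ^ 2)}

/-- The singular values of a real matrix, in non-increasing order (indexed by columns). -/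
noncomputable def svals {m n : ℕ} (A : Matrix (Fin m) (Fin n) ℝ) : Fin n → ℝ := fun i =>
  Real.sqrt ((Matrix.isHermitian_conjTranspose_mul_self A).eigenvalues
    (Tuple.sort ((Matrix.isHermitian_conjTranspose_mul_self A).eigenvalues) i.rev))

/-- `sval A k` is the `k`-th largest singular value of `A` (1-indexed). -/
noncomputable def sval {m n : ℕ} (A : Matrix (Fin m) (Fin n) ℝ) (k : ℕ) : ℝ :=
  if h : k - 1 < n then svals A ⟨k - 1, h⟩ else 0

/-- Smallest singular value of a (possibly rectangular) matrix. -/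
noncomputable def smin {m n : ℕ} (A : Matrix (Fin m) (Fin n) ℝ) : ℝ :=
  sval A (min m n)

/-- Condition number: the ratio between the largest and the smallest *nonzero*
singular values, i.e. the supremum of ratios of nonzero singular values. -/
noncomputable def kappa {m n : ℕ} (A : Matrix (Fin m) (Fin n) ℝ) : ℝ :=
  sSup {x : ℝ | ∃ i j : Fin n, svals A i ≠ 0 ∧ svals A j ≠ 0 ∧ x = svals A i / svals A j}

/-!
Write `c = 1 - ηλ` and `W, W₊, T, T₊, G₊` for `W_ℓ, W_{ℓ+1}, T_ℓ, T_{ℓ+1}, G_{ℓ+1}`.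
Expanding `D' = (c W₊ - η T₊)ᵀ (c W₊ - η T₊) - (c W - η T)(c W - η T)ᵀ` gives
`c² D + η² (T₊ᵀ T₊ - T Tᵀ)` plus the cross terms `-cη (W₊ᵀ T₊ - T Wᵀ) - cη (T₊ᵀ W₊ - W Tᵀ)`.
These vanish: by `G_ℓ = G₊ W₊` and `H_ℓ = W H_{ℓ-1}`, both `W₊ᵀ T₊` and `T Wᵀ` equal
`W₊ᵀ G₊ᵀ (Z_L - Y) Z_{L1}ᵀ H_{ℓ-1}ᵀ Wᵀ`.
-/

section BalancednessGap

variable {R : Type*} [CommRing R] {m p q r s t : Type*}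

theorem transpose_mul_gradient_eq [Fintype p] [Fintype q] [Fintype r]
    [Fintype s] [Fintype t] {A : Matrix m p R} {B : Matrix q m R} {G : Matrix r q R}
    {E : Matrix r s R} {F : Matrix s t R} {H : Matrix p t R} {S : Matrix m p R}
    {T : Matrix q m R} (hS : S = (G * B)ᵀ * E * F * Hᵀ) (hT : T = Gᵀ * E * F * (A * H)ᵀ) :
    Bᵀ * T = S * Aᵀ := by
  simp only [hS, hT, transpose_mul, Matrix.mul_assoc]

theorem transpose_mul_sub_mul_transpose_of_update [Fintype p] [Fintype q]
    {A S A' : Matrix m p R} {B T B' : Matrix q m R} {c η : R} (hTS : Bᵀ * T = S * Aᵀ)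
    (hA' : A' = c • A - η • S) (hB' : B' = c • B - η • T) :
    B'ᵀ * B' - A' * A'ᵀ = c ^ 2 • (Bᵀ * B - A * Aᵀ) + η ^ 2 • (Tᵀ * T - S * Sᵀ) := by
  have hST : Tᵀ * B = A * Sᵀ := by
    simpa only [transpose_mul, transpose_transpose] using congrArg transpose hTS
  subst hA' hB'
  simp only [transpose_sub, transpose_smul, Matrix.sub_mul, Matrix.mul_sub, Matrix.smul_mul,
    Matrix.mul_smul, hTS, hST]
  module

end BalancednessGap

theorem statement7_general
    (L1 L : ℕ)
    (n : ℕ → ℕ) (N : ℕ)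
    -- weights at step k and step k+1
    (W W' : ∀ ℓ : ℕ, Matrix (Fin (n ℓ)) (Fin (n (ℓ - 1))) ℝ)
    (Y : Matrix (Fin (n L)) (Fin N) ℝ)
    -- layer outputs at step k
    (Z : ∀ ℓ : ℕ, Matrix (Fin (n ℓ)) (Fin N) ℝ)
    -- partial products at step k: G ℓ = W_L ⋯ W_{ℓ+1}, H ℓ = W_ℓ ⋯ W_{L1+1}
    (G : ∀ ℓ : ℕ, Matrix (Fin (n L)) (Fin (n ℓ)) ℝ)
    (hGrec : ∀ ℓ, L1 ≤ ℓ → ℓ < L → G ℓ = G (ℓ + 1) * W (ℓ + 1))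
    (H : ∀ ℓ : ℕ, Matrix (Fin (n ℓ)) (Fin (n L1)) ℝ)
    (hHrec : ∀ ℓ, L1 + 1 ≤ ℓ → ℓ ≤ L → H ℓ = W ℓ * H (ℓ - 1))
    -- the gradient of the square loss with respect to the linear layers
    (T : ∀ ℓ : ℕ, Matrix (Fin (n ℓ)) (Fin (n (ℓ - 1))) ℝ)
    (hT : ∀ ℓ, L1 + 1 ≤ ℓ → ℓ ≤ L →
      T ℓ = (G ℓ)ᵀ * (Z L - Y) * (Z L1)ᵀ * (H (ℓ - 1))ᵀ)
    -- the gradient descent update with learning rate η and weight decay λ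
    (η lam : ℝ)
    (hupd : ∀ ℓ, L1 + 1 ≤ ℓ → ℓ ≤ L → W' ℓ = (1 - η * lam) • W ℓ - η • T ℓ) :
    ∀ ℓ, L1 + 1 ≤ ℓ → ℓ ≤ L - 1 →
      (show Matrix (Fin (n ℓ)) (Fin (n ℓ)) ℝ from (W' (ℓ + 1))ᵀ * W' (ℓ + 1)) -
          W' ℓ * (W' ℓ)ᵀ =
        (1 - η * lam) ^ 2 •
          ((show Matrix (Fin (n ℓ)) (Fin (n ℓ)) ℝ from (W (ℓ + 1))ᵀ * W (ℓ + 1)) -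
            W ℓ * (W ℓ)ᵀ) +
        η ^ 2 •
          ((show Matrix (Fin (n ℓ)) (Fin (n ℓ)) ℝ from (T (ℓ + 1))ᵀ * T (ℓ + 1)) -
            T ℓ * (T ℓ)ᵀ) := by
  intro ℓ hℓ hℓL
  have hTℓ := hT ℓ hℓ (by omega)
  rw [hGrec ℓ (by omega) (by omega)] at hTℓ
  have hTsucc : T (ℓ + 1) = (G (ℓ + 1))ᵀ * (Z L - Y) * (Z L1)ᵀ * (W ℓ * H (ℓ - 1))ᵀ := by
    rw [← hHrec ℓ hℓ (by omega)]
    exact hT (ℓ + 1) (by omega) (by omega)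
  exact transpose_mul_sub_mul_transpose_of_update (transpose_mul_gradient_eq hTℓ hTsucc)
    (hupd ℓ hℓ (by omega)) (hupd (ℓ + 1) (by omega) (by omega))

/-- the exact recursion satisfied by the balancedness gap
`D_ℓ = W_{ℓ+1}ᵀW_{ℓ+1} − W_ℓW_ℓᵀ` under one step of `λ`-regularized gradient descent
on the square loss. -/
theorem statement7
    (L1 L2 L : ℕ) (hL2 : 2 ≤ L2) (hLdef : L = L1 + L2)
    (n : ℕ → ℕ) (N K : ℕ) (hK : n L = K)
    (σ : ℝ → ℝ)
    -- weights at step k and step k+1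
    (W W' : ∀ ℓ : ℕ, Matrix (Fin (n ℓ)) (Fin (n (ℓ - 1))) ℝ)
    (X : Matrix (Fin (n 0)) (Fin N) ℝ)
    (Y : Matrix (Fin (n L)) (Fin N) ℝ)
    -- layer outputs at step k
    (Z : ∀ ℓ : ℕ, Matrix (Fin (n ℓ)) (Fin N) ℝ)
    (hZ0 : Z 0 = X)
    (hZnl : ∀ ℓ, 1 ≤ ℓ → ℓ ≤ L1 → Z ℓ = (W ℓ * Z (ℓ - 1)).map σ)
    (hZlin : ∀ ℓ, L1 + 1 ≤ ℓ → ℓ ≤ L → Z ℓ = W ℓ * Z (ℓ - 1))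
    -- partial products at step k: G ℓ = W_L ⋯ W_{ℓ+1}, H ℓ = W_ℓ ⋯ W_{L1+1}
    (G : ∀ ℓ : ℕ, Matrix (Fin (n L)) (Fin (n ℓ)) ℝ)
    (hGL : G L = 1)
    (hGrec : ∀ ℓ, L1 ≤ ℓ → ℓ < L → G ℓ = G (ℓ + 1) * W (ℓ + 1))
    (H : ∀ ℓ : ℕ, Matrix (Fin (n ℓ)) (Fin (n L1)) ℝ)
    (hHL1 : H L1 = 1)
    (hHrec : ∀ ℓ, L1 + 1 ≤ ℓ → ℓ ≤ L → H ℓ = W ℓ * H (ℓ - 1))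
    -- the gradient of the square loss with respect to the linear layers
    (T : ∀ ℓ : ℕ, Matrix (Fin (n ℓ)) (Fin (n (ℓ - 1))) ℝ)
    (hT : ∀ ℓ, L1 + 1 ≤ ℓ → ℓ ≤ L →
      T ℓ = (G ℓ)ᵀ * (Z L - Y) * (Z L1)ᵀ * (H (ℓ - 1))ᵀ)
    -- the gradient descent update with learning rate η and weight decay λ
    (η lam : ℝ)
    (hupd : ∀ ℓ, L1 + 1 ≤ ℓ → ℓ ≤ L → W' ℓ = (1 - η * lam) • W ℓ - η • T ℓ) :
    ∀ ℓ, L1 + 1 ≤ ℓ → ℓ ≤ L - 1 →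
      (show Matrix (Fin (n ℓ)) (Fin (n ℓ)) ℝ from (W' (ℓ + 1))ᵀ * W' (ℓ + 1)) -
          W' ℓ * (W' ℓ)ᵀ =
        (1 - η * lam) ^ 2 •
          ((show Matrix (Fin (n ℓ)) (Fin (n ℓ)) ℝ from (W (ℓ + 1))ᵀ * W (ℓ + 1)) -
            W ℓ * (W ℓ)ᵀ) +
        η ^ 2 •
          ((show Matrix (Fin (n ℓ)) (Fin (n ℓ)) ℝ from (T (ℓ + 1))ᵀ * T (ℓ + 1)) -
            T ℓ * (T ℓ)ᵀ) :=
  statement7_general L1 L n N W W' Y Z G hGrec H hHrec T hT η lam hupd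
end

section
/- Suppose the linear layers of a network are exactly balanced, i.e., W_ℓ W_ℓ^⊤ = W_{ℓ+1}^⊤ W_{ℓ+1} for every ℓ ∈ {L1+1,…,L−1}. Then (W_L W_L^⊤)^{L2} = W_{L:L1+1} W_{L:L1+1}^⊤, and consequently κ(W_L)^{L2} = κ(W_{L:L1+1}), where L2 = L − L1. -/
/-!
Exact balancedness `W ℓ (W ℓ)ᵀ = (W (ℓ+1))ᵀ W (ℓ+1)` lets a factor be pushed through the
partial products `G ℓ = W L ⋯ W (ℓ+1)`: with `A (B A)ᵏ B = (A B)ᵏ⁺¹`,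
`G ℓ (W ℓ (W ℓ)ᵀ)ᵏ (G ℓ)ᵀ = G (ℓ+1) (W (ℓ+1) (W (ℓ+1))ᵀ)ᵏ⁺¹ (G (ℓ+1))ᵀ`, and descending from
`ℓ = L` gives `G L1 (G L1)ᵀ = (W L (W L)ᵀ)^L2`.

The nonzero singular values of `A` are the square roots of the nonzero eigenvalues of `Aᵀ A`,
which are those of `A Aᵀ`. Hence the nonzero singular values of `G L1` are the `L2`-th powers of
those of `W L`, and the condition number, the ratio of the extreme ones, is raised to the `L2`-th
power.
-/

open Matrix Finset Real

theorem Matrix.mul_pow_mul_eq_pow_succ {R m n : Type*} [Semiring R] [Fintype m] [Fintype n]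
    [DecidableEq m] [DecidableEq n]
    (A : Matrix m n R) (B : Matrix n m R) (j : ℕ) :
    A * (B * A) ^ j * B = (A * B) ^ (j + 1) := by
  induction j with
  | zero => simp
  | succ j ih => rw [pow_succ, pow_succ, ← ih]; simp only [Matrix.mul_assoc]

section BalancedChain

variable {R : Type*} [CommSemiring R] {L1 L : ℕ} {n : ℕ → ℕ}
  {W : ∀ ℓ : ℕ, Matrix (Fin (n ℓ)) (Fin (n (ℓ - 1))) R}
  {G : ∀ ℓ : ℕ, Matrix (Fin (n L)) (Fin (n ℓ)) R}

theorem partialProduct_mul_gram_pow_mul_transpose (hGL : G L = 1)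
    (hGrec : ∀ ℓ, L1 ≤ ℓ → ℓ < L → G ℓ = G (ℓ + 1) * W (ℓ + 1))
    (hbal : ∀ ℓ, L1 + 1 ≤ ℓ → ℓ ≤ L - 1 →
      W ℓ * (W ℓ)ᵀ = (show Matrix (Fin (n ℓ)) (Fin (n ℓ)) R from (W (ℓ + 1))ᵀ * W (ℓ + 1)))
    {ℓ : ℕ} (hℓ : L1 + 1 ≤ ℓ) (hℓL : ℓ ≤ L) (k : ℕ) :
    G ℓ * (W ℓ * (W ℓ)ᵀ) ^ k * (G ℓ)ᵀ = (W L * (W L)ᵀ) ^ (L - ℓ + k) := by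
  induction hℓL using Nat.decreasingInduction generalizing k with
  | self => rw [hGL, transpose_one, Matrix.one_mul, Matrix.mul_one, Nat.sub_self, zero_add]
  | of_succ ℓ hℓL ih =>
    have hsucc : G ℓ * (W ℓ * (W ℓ)ᵀ) ^ k * (G ℓ)ᵀ =
        G (ℓ + 1) * (W (ℓ + 1) * (W (ℓ + 1))ᵀ) ^ (k + 1) * (G (ℓ + 1))ᵀ := by
      rw [hGrec ℓ (by omega) hℓL, hbal ℓ hℓ (by omega), transpose_mul,
        ← mul_pow_mul_eq_pow_succ]
      simp only [Matrix.mul_assoc]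
    rw [hsucc, ih (by omega) (k + 1)]
    congr 1
    omega

theorem gram_pow_eq_partialProduct_gram (hGL : G L = 1)
    (hGrec : ∀ ℓ, L1 ≤ ℓ → ℓ < L → G ℓ = G (ℓ + 1) * W (ℓ + 1))
    (hbal : ∀ ℓ, L1 + 1 ≤ ℓ → ℓ ≤ L - 1 →
      W ℓ * (W ℓ)ᵀ = (show Matrix (Fin (n ℓ)) (Fin (n ℓ)) R from (W (ℓ + 1))ᵀ * W (ℓ + 1)))
    (hL : L1 < L) :
    (W L * (W L)ᵀ) ^ (L - L1) = G L1 * (G L1)ᵀ := by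
  rw [show L - L1 = L - (L1 + 1) + 1 by omega,
    ← partialProduct_mul_gram_pow_mul_transpose hGL hGrec hbal le_rfl hL 1,
    hGrec L1 le_rfl hL, transpose_mul, pow_one]
  simp only [Matrix.mul_assoc]

end BalancedChain

open Polynomial in
theorem Matrix.spectrum_mul_comm_sdiff_zero {K m n : Type*} [Field K] [Fintype m] [Fintype n]
    [DecidableEq m] [DecidableEq n] (A : Matrix m n K) (B : Matrix n m K) :
    spectrum K (A * B) \ {0} = spectrum K (B * A) \ {0} := by
  ext μ
  simp only [Set.mem_sdiff, Set.mem_singleton_iff, mem_spectrum_iff_isRoot_charpoly,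
    and_congr_left_iff, IsRoot.def]
  intro hμ
  have h := congrArg (eval μ) (charpoly_mul_comm' A B)
  simp only [eval_mul, eval_pow, eval_X] at h
  rw [← mul_eq_zero_iff_left (pow_ne_zero (Fintype.card n) hμ), h,
    mul_eq_zero_iff_left (pow_ne_zero _ hμ)]

theorem Matrix.IsHermitian.spectrum_pow {n : Type*} [Fintype n] [DecidableEq n]
    {M : Matrix n n ℝ} (hM : M.IsHermitian) (p : ℕ) :
    spectrum ℝ (M ^ p) = (· ^ p) '' spectrum ℝ M := by
  rw [← cfc_pow_id (R := ℝ) M p hM.isSelfAdjoint, cfc_map_spectrum _ _ hM.isSelfAdjoint]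

theorem Matrix.nonneg_of_mem_spectrum_conjTranspose_mul_self {m n : Type*} [Fintype m]
    [Fintype n] [DecidableEq n] (A : Matrix m n ℝ) {x : ℝ} (hx : x ∈ spectrum ℝ (Aᴴ * A)) :
    0 ≤ x :=
  (posSemidef_iff_isHermitian_and_spectrum_nonneg.mp (posSemidef_conjTranspose_mul_self A)).2 hx

theorem Real.sqrt_pow {x : ℝ} (hx : 0 ≤ x) (p : ℕ) : √(x ^ p) = √x ^ p := by
  rw [← Real.sqrt_sq (pow_nonneg (Real.sqrt_nonneg x) p), ← pow_mul, mul_comm, pow_mul,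
    Real.sq_sqrt hx]

theorem Real.sSup_image_pow {T : Set ℝ} (hT : T.Finite) (hT0 : ∀ x ∈ T, 0 ≤ x) {p : ℕ}
    (hp : p ≠ 0) : sSup ((· ^ p) '' T) = sSup T ^ p := by
  rcases T.eq_empty_or_nonempty with rfl | hne
  · simp [zero_pow hp]
  have hmax : IsGreatest T (sSup T) := ⟨hne.csSup_mem hT, fun _ hx => le_csSup hT.bddAbove hx⟩
  exact (((pow_left_monotoneOn (n := p)).mono hT0).map_isGreatest hmax).csSup_eq

section SingularValues

open scoped Pointwise

variable {m k : ℕ}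

def nonzeroSvals (A : Matrix (Fin m) (Fin k) ℝ) : Set ℝ := Set.range (svals A) \ {0}

theorem range_svals (A : Matrix (Fin m) (Fin k) ℝ) :
    Set.range (svals A) = Real.sqrt '' spectrum ℝ (Aᴴ * A) := by
  have hA := isHermitian_conjTranspose_mul_self A
  rw [hA.spectrum_real_eq_range_eigenvalues, ← Set.range_comp]
  exact ((Tuple.sort hA.eigenvalues).surjective.comp Fin.rev_surjective).range_comp
    (Real.sqrt ∘ hA.eigenvalues)

theorem nonzeroSvals_eq (A : Matrix (Fin m) (Fin k) ℝ) :
    nonzeroSvals A = Real.sqrt '' (spectrum ℝ (Aᴴ * A) \ {0}) := by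
  ext s
  simp only [nonzeroSvals, range_svals, Set.mem_sdiff, Set.mem_image, Set.mem_singleton_iff]
  constructor
  · rintro ⟨⟨x, hx, rfl⟩, hs⟩
    exact ⟨x, ⟨hx, fun hx0 => hs (by rw [hx0, Real.sqrt_zero])⟩, rfl⟩
  · rintro ⟨x, ⟨hx, hx0⟩, rfl⟩
    have hxpos := (nonneg_of_mem_spectrum_conjTranspose_mul_self A hx).lt_of_ne' hx0
    exact ⟨⟨x, hx, rfl⟩, (Real.sqrt_pos.mpr hxpos).ne'⟩

theorem finite_nonzeroSvals (A : Matrix (Fin m) (Fin k) ℝ) : (nonzeroSvals A).Finite :=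
  (Set.finite_range _).sdiff

theorem pos_of_mem_nonzeroSvals {A : Matrix (Fin m) (Fin k) ℝ} {s : ℝ}
    (hs : s ∈ nonzeroSvals A) : 0 < s := by
  obtain ⟨⟨i, rfl⟩, hs0⟩ := hs
  exact (Real.sqrt_nonneg _).lt_of_ne' hs0

theorem kappa_eq_sSup_div (A : Matrix (Fin m) (Fin k) ℝ) :
    kappa A = sSup (nonzeroSvals A / nonzeroSvals A) := by
  unfold kappa
  congr 1
  ext x
  simp only [Set.mem_ofPred_eq, Set.mem_div, nonzeroSvals, Set.mem_sdiff, Set.mem_range,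
    Set.mem_singleton_iff]
  constructor
  · rintro ⟨i, j, hi, hj, rfl⟩
    exact ⟨_, ⟨⟨i, rfl⟩, hi⟩, _, ⟨⟨j, rfl⟩, hj⟩, rfl⟩
  · rintro ⟨_, ⟨⟨i, rfl⟩, hi⟩, _, ⟨⟨j, rfl⟩, hj⟩, rfl⟩
    exact ⟨i, j, hi, hj, rfl⟩

theorem nonzeroSvals_eq_image_pow {k' : ℕ} {A : Matrix (Fin m) (Fin k) ℝ}
    {B : Matrix (Fin m) (Fin k') ℝ} {p : ℕ} (hp : p ≠ 0) (h : B * Bᴴ = (A * Aᴴ) ^ p) :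
    nonzeroSvals B = (· ^ p) '' nonzeroSvals A := by
  have hzero : (· ^ p) ⁻¹' {(0 : ℝ)} = {0} := by ext; simp [hp]
  have himage : ∀ X : Set ℝ, (· ^ p) '' X \ {0} = (· ^ p) '' (X \ {0}) := fun X => by
    rw [← Set.image_sdiff_preimage, hzero]
  rw [nonzeroSvals_eq, nonzeroSvals_eq, spectrum_mul_comm_sdiff_zero Bᴴ B, h,
    (isHermitian_mul_conjTranspose_self A).spectrum_pow, himage,
    ← spectrum_mul_comm_sdiff_zero Aᴴ A, Set.image_image, Set.image_image]
  exact Set.image_congr fun x hx =>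
    Real.sqrt_pow (nonneg_of_mem_spectrum_conjTranspose_mul_self A hx.1) p

theorem kappa_pow_eq_of_mul_conjTranspose_eq_pow {k' : ℕ} {A : Matrix (Fin m) (Fin k) ℝ}
    {B : Matrix (Fin m) (Fin k') ℝ} {p : ℕ} (hp : p ≠ 0) (h : B * Bᴴ = (A * Aᴴ) ^ p) :
    kappa A ^ p = kappa B := by
  have hratio_nonneg : ∀ x ∈ nonzeroSvals A / nonzeroSvals A, 0 ≤ x := by
    rintro _ ⟨s, hs, t, ht, rfl⟩
    exact (div_pos (pos_of_mem_nonzeroSvals hs) (pos_of_mem_nonzeroSvals ht)).le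
  have himage_div : (· ^ p) '' (nonzeroSvals A / nonzeroSvals A) =
      (· ^ p) '' nonzeroSvals A / (· ^ p) '' nonzeroSvals A :=
    Set.image_image2_distrib fun s t => div_pow s t p
  rw [kappa_eq_sSup_div, kappa_eq_sSup_div, nonzeroSvals_eq_image_pow hp h, ← himage_div,
    Real.sSup_image_pow ((finite_nonzeroSvals A).div (finite_nonzeroSvals A)) hratio_nonneg hp]

end SingularValues

/-- exactly balanced linear layers give
`(W_L W_Lᵀ)^{L2} = W_{L:L1+1} W_{L:L1+1}ᵀ` and `κ(W_L)^{L2} = κ(W_{L:L1+1})`. -/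
theorem statement16
    (L1 L2 L : ℕ) (hL2 : 1 ≤ L2) (hLdef : L = L1 + L2)
    (n : ℕ → ℕ)
    (W : ∀ ℓ : ℕ, Matrix (Fin (n ℓ)) (Fin (n (ℓ - 1))) ℝ)
    -- partial products of the linear head: G ℓ = W_L ⋯ W_{ℓ+1}
    (G : ∀ ℓ : ℕ, Matrix (Fin (n L)) (Fin (n ℓ)) ℝ)
    (hGL : G L = 1)
    (hGrec : ∀ ℓ, L1 ≤ ℓ → ℓ < L → G ℓ = G (ℓ + 1) * W (ℓ + 1))
    -- exact balancedness
    (hbal : ∀ ℓ, L1 + 1 ≤ ℓ → ℓ ≤ L - 1 →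
      W ℓ * (W ℓ)ᵀ =
        (show Matrix (Fin (n ℓ)) (Fin (n ℓ)) ℝ from (W (ℓ + 1))ᵀ * W (ℓ + 1))) :
    (W L * (W L)ᵀ) ^ L2 = G L1 * (G L1)ᵀ ∧
    kappa (W L) ^ L2 = kappa (G L1) := by
  obtain rfl : L2 = L - L1 := by omega
  have hgram := gram_pow_eq_partialProduct_gram hGL hGrec hbal (by omega)
  refine ⟨hgram, kappa_pow_eq_of_mul_conjTranspose_eq_pow (by omega) ?_⟩
  simpa only [conjTranspose_eq_transpose_of_trivial] using hgram.symm
end
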